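/- Let N = (B, E, pre, post) be a finite Petri net with an injective labeling φ : B → ℕ such that every condition b ∈ B lies in pre(e) or post(e) for some event e. Let P₁, P₂ ∈ ℕ[X, Y] with τ(P₁) ∩ τ(P₂) = ∅. Then P(N, φ) = P₁ · P₂ if and only if there exist finite Petri nets N₁ = (B₁, E₁, pre₁, post₁) and N₂ = (B₂, E₂, pre₂, post₂) with injective labelings φ₁ : B₁ → ℕ and φ₂ : B₂ → ℕ having disjoint images, in which every condition lies in some pre- or post-set, with P(N₁, φ₁) = P₁ and P(N₂, φ₂) = P₂, together with bijections β : B ≃ B₁ ⊕ B₂ and η : E ≃ {(o₁, o₂) ∈ Option E₁ × Option E₂ : (o₁, o₂) ≠ (none, none)} such that: (i) φ b = (Sum.elim φ₁ φ₂) (β b) for all b ∈ B; (ii) for every e ∈ E, the image of pre(e) under β equals the union of the images of pre₁(e₁) (under inl) and pre₂(e₂) (under inr), where (e₁, e₂) are the components of η(e) and a component equal to none contributes the empty set; and (iii) the same compatibility holds with post in place of pre. (This is the decomposition, i.e. parallelization, criterion for Petri nets via their polynomials.) -/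

import Mathlib

/-- `tau k` is the set of positions of 1-bits in the binary expansion of `k`. -/
def tau (k : ℕ) : Set ℕ := {t | Nat.testBit k t = true}

/-- For `P ∈ ℕ[X, Y]`, `tauMv P` is the union of `tau i ∪ tau j` over all monomials
`X^i Y^j` in the support of `P`. -/
def tauMv (P : MvPolynomial (Fin 2) ℕ) : Set ℕ :=
  ⋃ d ∈ P.support, (tau (d 0) ∪ tau (d 1))

/-- The Petri net polynomial
`P(N, φ) = 1 + ∑_{e : E} X ^ (∑_{b ∈ pre e} 2 ^ φ b) * Y ^ (∑_{b ∈ post e} 2 ^ φ b)`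
in `ℕ[X, Y]`, realized as `MvPolynomial (Fin 2) ℕ` with `X = X 0`, `Y = X 1`. -/
noncomputable def petriPoly {B E : Type*} [Fintype E]
    (pre post : E → Finset B) (φ : B → ℕ) : MvPolynomial (Fin 2) ℕ :=
  1 + ∑ e : E, MvPolynomial.X 0 ^ (∑ b ∈ pre e, 2 ^ φ b) *
      MvPolynomial.X 1 ^ (∑ b ∈ post e, 2 ^ φ b)

/-!
Since `φ` is injective, the binary expansions of the exponents of an event's monomial are
exactly the labels of its pre- and post-set, so `P(N, φ)` determines `N` up to renaming the
events. The product `P(N₁, φ₁) · P(N₂, φ₂)` is the polynomial of the parallel composition,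
whose events are the pairs (event or idle, event or idle) other than (idle, idle).

Conversely, if `P(N, φ) = P₁ · P₂` and `τ(P₁) ∩ τ(P₂) = ∅`, no carries occur when multiplying,
so `φ(B) = τ(P₁ · P₂) = τ(P₁) ∪ τ(P₂)`. Splitting `B` along this union, each `Pᵢ` is realized by
a net on its part, with one event per monomial counted with multiplicity, and uniqueness
identifies `N` with the parallel composition of the two.
-/

open MvPolynomial

section Binary

variable {B : Type*}

lemma tau_eq_coe_bitIndices (n : ℕ) : tau n = ↑n.bitIndices.toFinset := by
  ext t
  simp [tau]

lemma tau_sum_two_pow {φ : B → ℕ} (hφ : φ.Injective) (s : Finset B) :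
    tau (∑ b ∈ s, 2 ^ φ b) = φ '' s := by
  have h := Finset.sum_map s ⟨φ, hφ⟩ (2 ^ ·)
  dsimp only [Function.Embedding.coeFn_mk] at h
  rw [← h, tau_eq_coe_bitIndices, Finset.toFinset_bitIndices_sum_two_pow, Finset.coe_map]
  rfl

lemma sum_two_pow_inj {φ : B → ℕ} (hφ : φ.Injective) {s t : Finset B} :
    ∑ b ∈ s, 2 ^ φ b = ∑ b ∈ t, 2 ^ φ b ↔ s = t := by
  refine ⟨fun h => ?_, fun h => h ▸ rfl⟩
  have h' := congrArg tau h
  rw [tau_sum_two_pow hφ, tau_sum_two_pow hφ] at h'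
  exact Finset.coe_injective (Set.image_injective.2 hφ h')

lemma tau_add {a b : ℕ} (h : Disjoint (tau a) (tau b)) : tau (a + b) = tau a ∪ tau b := by
  rw [tau_eq_coe_bitIndices a, tau_eq_coe_bitIndices b, Finset.disjoint_coe] at h
  have hsum : a + b = ∑ t ∈ a.bitIndices.toFinset ∪ b.bitIndices.toFinset, 2 ^ t := by
    rw [Finset.sum_union h, Finset.sum_toFinset_bitIndices_two_pow,
      Finset.sum_toFinset_bitIndices_two_pow]
  rw [hsum, tau_eq_coe_bitIndices, tau_eq_coe_bitIndices, tau_eq_coe_bitIndices,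
    Finset.toFinset_bitIndices_sum_two_pow, Finset.coe_union]

lemma sum_two_pow_preimage {ψ : B → ℕ} (hψ : ψ.Injective) {n : ℕ} (hn : tau n ⊆ Set.range ψ) :
    ∑ c ∈ n.bitIndices.toFinset.preimage ψ hψ.injOn, 2 ^ ψ c = n := by
  rw [Finset.sum_preimage ψ _ hψ.injOn (2 ^ ·) fun t ht hψt =>
      absurd (hn (by simpa [tau_eq_coe_bitIndices] using ht)) hψt,
    Finset.sum_toFinset_bitIndices_two_pow]

end Binary

lemma mem_tauMv {P : MvPolynomial (Fin 2) ℕ} {t : ℕ} :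
    t ∈ tauMv P ↔ ∃ d ∈ P.support, ∃ i, t ∈ tau (d i) := by
  simp [tauMv, Fin.exists_fin_two]

lemma tau_subset_tauMv {P : MvPolynomial (Fin 2) ℕ} {d : Fin 2 →₀ ℕ} (hd : d ∈ P.support)
    (i : Fin 2) : tau (d i) ⊆ tauMv P :=
  fun _ ht => mem_tauMv.2 ⟨d, hd, i, ht⟩

lemma coeff_mul_coeff_le_coeff_add_mul {σ : Type*} (p q : MvPolynomial σ ℕ) (u v : σ →₀ ℕ) :
    coeff u p * coeff v q ≤ coeff (u + v) (p * q) := by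
  classical
  rw [coeff_mul]
  exact Finset.single_le_sum (f := fun x : (σ →₀ ℕ) × (σ →₀ ℕ) => coeff x.1 p * coeff x.2 q)
    (a := (u, v)) (fun _ _ => Nat.zero_le _) (Finset.HasAntidiagonal.mem_antidiagonal.2 rfl)

lemma tauMv_subset_tauMv_mul {p : MvPolynomial (Fin 2) ℕ} (q : MvPolynomial (Fin 2) ℕ)
    (hq : coeff 0 q ≠ 0) : tauMv p ⊆ tauMv (p * q) := by
  intro t ht
  obtain ⟨d, hd, i, hti⟩ := mem_tauMv.1 ht
  refine mem_tauMv.2 ⟨d, mem_support_iff.2 fun hd' => ?_, i, hti⟩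
  have hle := coeff_mul_coeff_le_coeff_add_mul p q d 0
  rw [add_zero, hd', Nat.le_zero] at hle
  exact mul_ne_zero (mem_support_iff.1 hd) hq hle

lemma tauMv_mul {P₁ P₂ : MvPolynomial (Fin 2) ℕ} (hτ : Disjoint (tauMv P₁) (tauMv P₂))
    (h₁ : coeff 0 P₁ ≠ 0) (h₂ : coeff 0 P₂ ≠ 0) :
    tauMv (P₁ * P₂) = tauMv P₁ ∪ tauMv P₂ := by
  classical
  refine subset_antisymm (fun t ht => ?_) (Set.union_subset (tauMv_subset_tauMv_mul P₂ h₂)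
    (mul_comm P₁ P₂ ▸ tauMv_subset_tauMv_mul P₁ h₁))
  obtain ⟨d, hd, i, hti⟩ := mem_tauMv.1 ht
  obtain ⟨u, hu, v, hv, rfl⟩ := Finset.mem_add.1 (support_mul P₁ P₂ hd)
  rw [Finsupp.add_apply, tau_add (hτ.mono (tau_subset_tauMv hu i) (tau_subset_tauMv hv i))] at hti
  exact Set.union_subset_union (tau_subset_tauMv hu i) (tau_subset_tauMv hv i) hti

section Monomials

variable {B E : Type*}

noncomputable def petriExponent (φ : B → ℕ) (s t : Finset B) : Fin 2 →₀ ℕ :=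
  Finsupp.single 0 (∑ b ∈ s, 2 ^ φ b) + Finsupp.single 1 (∑ b ∈ t, 2 ^ φ b)

@[simp] lemma petriExponent_apply_zero (φ : B → ℕ) (s t : Finset B) :
    petriExponent φ s t 0 = ∑ b ∈ s, 2 ^ φ b := by
  simp [petriExponent]

@[simp] lemma petriExponent_apply_one (φ : B → ℕ) (s t : Finset B) :
    petriExponent φ s t 1 = ∑ b ∈ t, 2 ^ φ b := by
  simp [petriExponent]

lemma petriExponent_inj {φ : B → ℕ} (hφ : φ.Injective) {s t s' t' : Finset B} :
    petriExponent φ s t = petriExponent φ s' t' ↔ s = s' ∧ t = t' := by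
  refine ⟨fun h => ⟨?_, ?_⟩, fun h => h.1 ▸ h.2 ▸ rfl⟩
  · simpa [sum_two_pow_inj hφ] using DFunLike.congr_fun h 0
  · simpa [sum_two_pow_inj hφ] using DFunLike.congr_fun h 1

noncomputable def petriMonomial (φ : B → ℕ) (s t : Finset B) : MvPolynomial (Fin 2) ℕ :=
  X 0 ^ (∑ b ∈ s, 2 ^ φ b) * X 1 ^ (∑ b ∈ t, 2 ^ φ b)

lemma petriMonomial_eq_monomial (φ : B → ℕ) (s t : Finset B) :
    petriMonomial φ s t = monomial (petriExponent φ s t) 1 := by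
  rw [petriMonomial, petriExponent, X_pow_eq_monomial, X_pow_eq_monomial, monomial_mul, mul_one]

@[simp] lemma petriMonomial_empty (φ : B → ℕ) : petriMonomial φ ∅ ∅ = 1 := by
  simp [petriMonomial]

variable [Fintype E]

lemma petriPoly_eq_one_add (pre post : E → Finset B) (φ : B → ℕ) :
    petriPoly pre post φ = 1 + ∑ e, petriMonomial φ (pre e) (post e) :=
  rfl

lemma petriPoly_eq_sum_option (pre post : E → Finset B) (φ : B → ℕ) :
    petriPoly pre post φ = ∑ o : Option E, petriMonomial φ (o.elim ∅ pre) (o.elim ∅ post) := by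
  rw [Fintype.sum_option]
  simp [petriPoly_eq_one_add]

lemma coeff_petriPoly (pre post : E → Finset B) (φ : B → ℕ) (d : Fin 2 →₀ ℕ) :
    coeff d (petriPoly pre post φ) =
      (if d = 0 then 1 else 0) + Fintype.card {e // petriExponent φ (pre e) (post e) = d} := by
  classical
  simp [petriPoly_eq_one_add, coeff_one, coeff_sum, petriMonomial_eq_monomial, coeff_monomial,
    Fintype.card_subtype, eq_comm]

lemma coeff_zero_petriPoly_ne_zero (pre post : E → Finset B) (φ : B → ℕ) :
    coeff 0 (petriPoly pre post φ) ≠ 0 := by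
  simp [coeff_petriPoly]

lemma mem_support_petriPoly {pre post : E → Finset B} {φ : B → ℕ} {d : Fin 2 →₀ ℕ} :
    d ∈ (petriPoly pre post φ).support ↔
      d = 0 ∨ ∃ e, petriExponent φ (pre e) (post e) = d := by
  rw [mem_support_iff, coeff_petriPoly]
  by_cases hd : d = 0 <;> simp [hd, Fintype.card_eq_zero_iff]

lemma tauMv_petriPoly {pre post : E → Finset B} {φ : B → ℕ} (hφ : φ.Injective)
    (hcov : ∀ b, ∃ e, b ∈ pre e ∨ b ∈ post e) :
    tauMv (petriPoly pre post φ) = Set.range φ := by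
  ext t
  simp only [mem_tauMv, mem_support_petriPoly, Fin.exists_fin_two]
  constructor
  · rintro ⟨d, rfl | ⟨e, rfl⟩, h⟩
    · simp [tau] at h
    · rw [petriExponent_apply_zero, petriExponent_apply_one, tau_sum_two_pow hφ,
        tau_sum_two_pow hφ] at h
      rcases h with ⟨b, -, rfl⟩ | ⟨b, -, rfl⟩ <;> exact ⟨b, rfl⟩
  · rintro ⟨b, rfl⟩
    obtain ⟨e, he⟩ := hcov b
    refine ⟨_, Or.inr ⟨e, rfl⟩, ?_⟩
    rw [petriExponent_apply_zero, petriExponent_apply_one, tau_sum_two_pow hφ, tau_sum_two_pow hφ]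
    exact he.imp (Set.mem_image_of_mem φ) (Set.mem_image_of_mem φ)

lemma petriPoly_map_equiv {B' : Type*} (pre post : E → Finset B) (β : B ≃ B') (φ : B' → ℕ) :
    petriPoly (fun e => (pre e).map β.toEmbedding) (fun e => (post e).map β.toEmbedding) φ =
      petriPoly pre post (fun b => φ (β b)) := by
  simp [petriPoly_eq_one_add, petriMonomial, Finset.sum_map]

variable {E' : Type*} [Fintype E']

lemma petriPoly_congr_of_equiv {pre post : E → Finset B} {pre' post' : E' → Finset B}
    (φ : B → ℕ) (η : E ≃ E') (h : ∀ e, pre' (η e) = pre e ∧ post' (η e) = post e) :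
    petriPoly pre post φ = petriPoly pre' post' φ := by
  simp only [petriPoly_eq_one_add, ← η.sum_comp, h]

theorem petriPoly_eq_iff_exists_equiv {pre post : E → Finset B} {pre' post' : E' → Finset B}
    {φ : B → ℕ} (hφ : φ.Injective) :
    petriPoly pre post φ = petriPoly pre' post' φ ↔
      ∃ η : E ≃ E', ∀ e, pre' (η e) = pre e ∧ post' (η e) = post e := by
  refine ⟨fun h => ?_, fun ⟨η, hη⟩ => petriPoly_congr_of_equiv φ η hη⟩
  have hcard (d : Fin 2 →₀ ℕ) : Fintype.card {e // petriExponent φ (pre e) (post e) = d} =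
      Fintype.card {e' // petriExponent φ (pre' e') (post' e') = d} :=
    Nat.add_left_cancel <| by rw [← coeff_petriPoly, ← coeff_petriPoly, h]
  exact ⟨Equiv.ofFiberEquiv fun d => Fintype.equivOfCardEq (hcard d),
    fun e => (petriExponent_inj hφ).1 <| Equiv.ofFiberEquiv_map
      (g := fun e' => petriExponent φ (pre' e') (post' e')) _ e⟩

end Monomials

section Parallel

variable {B₁ B₂ E₁ E₂ : Type*}

def parallelArcs (arcs₁ : E₁ → Finset B₁) (arcs₂ : E₂ → Finset B₂)
    (p : {p : Option E₁ × Option E₂ // p ≠ (none, none)}) : Finset (B₁ ⊕ B₂) :=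
  (p.1.1.elim ∅ arcs₁).disjSum (p.1.2.elim ∅ arcs₂)

lemma petriMonomial_disjSum (φ₁ : B₁ → ℕ) (φ₂ : B₂ → ℕ) (s₁ t₁ : Finset B₁)
    (s₂ t₂ : Finset B₂) :
    petriMonomial (Sum.elim φ₁ φ₂) (s₁.disjSum s₂) (t₁.disjSum t₂) =
      petriMonomial φ₁ s₁ t₁ * petriMonomial φ₂ s₂ t₂ := by
  simp only [petriMonomial, Finset.sum_disjSum, Sum.elim_inl, Sum.elim_inr, pow_add]
  ring

theorem petriPoly_parallel [Fintype E₁] [Fintype E₂] [DecidableEq E₁] [DecidableEq E₂]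
    (pre₁ post₁ : E₁ → Finset B₁) (pre₂ post₂ : E₂ → Finset B₂) (φ₁ : B₁ → ℕ) (φ₂ : B₂ → ℕ) :
    petriPoly (parallelArcs pre₁ pre₂) (parallelArcs post₁ post₂) (Sum.elim φ₁ φ₂) =
      petriPoly pre₁ post₁ φ₁ * petriPoly pre₂ post₂ φ₂ := by
  rw [petriPoly_eq_sum_option pre₁, petriPoly_eq_sum_option pre₂, Finset.sum_mul_sum,
    ← Fintype.sum_prod_type', Fintype.sum_eq_add_sum_subtype_ne _ (none, none)]
  simp [petriPoly_eq_one_add, parallelArcs, petriMonomial_disjSum]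

lemma image_eq_union_iff_map_eq_disjSum {B : Type*} (β : B ≃ B₁ ⊕ B₂) (s : Finset B)
    (s₁ : Finset B₁) (s₂ : Finset B₂) :
    ⇑β '' ↑s = Sum.inl '' ↑s₁ ∪ Sum.inr '' ↑s₂ ↔ s.map β.toEmbedding = s₁.disjSum s₂ := by
  have hcoe : (↑(s₁.disjSum s₂) : Set (B₁ ⊕ B₂)) = Sum.inl '' ↑s₁ ∪ Sum.inr '' ↑s₂ := by
    ext (x | x) <;> simp
  rw [← Finset.coe_inj, Finset.coe_map, hcoe]
  rfl

end Parallel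

lemma sum_sigma_monomial {σ : Type*} (P : MvPolynomial σ ℕ) :
    ∑ x : Σ d : P.support, Fin (coeff d P), monomial (x.1 : σ →₀ ℕ) 1 = P := by
  rw [Fintype.sum_sigma]
  simp only [Finset.sum_const, Finset.card_univ, Fintype.card_fin, smul_monomial, smul_eq_mul,
    mul_one]
  rw [Finset.sum_coe_sort P.support (fun d => monomial d (coeff d P)), ← as_sum]

theorem exists_petriPoly_eq {C : Type} [Fintype C] {ψ : C → ℕ} (hψ : ψ.Injective)
    {P : MvPolynomial (Fin 2) ℕ} (hP : coeff 0 P ≠ 0) (hrange : Set.range ψ = tauMv P) :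
    ∃ (E : Type) (_ : Fintype E) (pre post : E → Finset C),
      petriPoly pre post ψ = P ∧ ∀ c, ∃ e, c ∈ pre e ∨ c ∈ post e := by
  classical
  -- one event per monomial of `P` counted with multiplicity, except for one copy of the
  -- constant monomial, which is the idle event `*`
  let x₀ : Σ d : P.support, Fin (coeff d P) :=
    ⟨⟨0, mem_support_iff.2 hP⟩, ⟨0, Nat.pos_of_ne_zero hP⟩⟩
  let arcs (i : Fin 2) (x : {x // x ≠ x₀}) : Finset C :=
    (x.1.1.1 i).bitIndices.toFinset.preimage ψ hψ.injOn
  have hexp (x : {x // x ≠ x₀}) : petriExponent ψ (arcs 0 x) (arcs 1 x) = x.1.1 := by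
    have hbits (i : Fin 2) : tau (x.1.1.1 i) ⊆ Set.range ψ := hrange ▸ tau_subset_tauMv x.1.1.2 i
    refine Finsupp.ext (Fin.forall_fin_two.2 ⟨?_, ?_⟩)
    · exact (petriExponent_apply_zero ..).trans (sum_two_pow_preimage hψ (hbits 0))
    · exact (petriExponent_apply_one ..).trans (sum_two_pow_preimage hψ (hbits 1))
  refine ⟨{x // x ≠ x₀}, inferInstance, arcs 0, arcs 1, ?_, fun c => ?_⟩
  · conv_rhs => rw [← sum_sigma_monomial P, Fintype.sum_eq_add_sum_subtype_ne _ x₀]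
    simp [petriPoly_eq_one_add, petriMonomial_eq_monomial, hexp, x₀]
  · obtain ⟨d, hd, i, hi⟩ := mem_tauMv.1 (hrange ▸ Set.mem_range_self c)
    have hd0 : d ≠ 0 := by
      rintro rfl
      simp [tau] at hi
    refine ⟨⟨⟨⟨d, hd⟩, ⟨0, Nat.pos_of_ne_zero (mem_support_iff.1 hd)⟩⟩, ?_⟩, ?_⟩
    · simp [x₀, hd0]
    · fin_cases i <;> simp_all [arcs, tau]

lemma range_restrict_of_range_eq_union {B : Type*} {φ : B → ℕ} {S T : Set ℕ}
    (hrange : Set.range φ = S ∪ T) (hST : Disjoint S T) :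
    Set.range (φ ∘ Subtype.val : {b // φ b ∈ S} → ℕ) = S ∧
      Set.range (φ ∘ Subtype.val : {b // φ b ∉ S} → ℕ) = T := by
  have hmem (t : ℕ) : t ∈ S ∪ T → ∃ b, φ b = t := by
    rw [← hrange]
    exact id
  refine ⟨Set.ext fun t => ⟨?_, fun ht => ?_⟩, Set.ext fun t => ⟨?_, fun ht => ?_⟩⟩
  · rintro ⟨b, rfl⟩
    exact b.2
  · obtain ⟨b, rfl⟩ := hmem t (Or.inl ht)
    exact ⟨⟨b, ht⟩, rfl⟩
  · rintro ⟨b, rfl⟩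
    exact (hrange ▸ Set.mem_range_self b.1 : φ b ∈ S ∪ T).resolve_left b.2
  · obtain ⟨b, rfl⟩ := hmem t (Or.inr ht)
    exact ⟨⟨b, Set.disjoint_right.1 hST ht⟩, rfl⟩

theorem petri_decomposition_criterion {B E : Type} [Fintype B] [Fintype E]
    (pre post : E → Finset B) (φ : B → ℕ) (hφ : Function.Injective φ)
    (hcov : ∀ b : B, ∃ e : E, b ∈ pre e ∨ b ∈ post e)
    (P₁ P₂ : MvPolynomial (Fin 2) ℕ)
    (hτ : tauMv P₁ ∩ tauMv P₂ = ∅) :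
    petriPoly pre post φ = P₁ * P₂ ↔
    ∃ (B₁ E₁ B₂ E₂ : Type) (_ : Fintype B₁) (iE₁ : Fintype E₁)
      (_ : Fintype B₂) (iE₂ : Fintype E₂)
      (pre₁ post₁ : E₁ → Finset B₁) (pre₂ post₂ : E₂ → Finset B₂)
      (φ₁ : B₁ → ℕ) (φ₂ : B₂ → ℕ),
      Function.Injective φ₁ ∧ Function.Injective φ₂ ∧
      Disjoint (Set.range φ₁) (Set.range φ₂) ∧
      (∀ b₁ : B₁, ∃ e₁ : E₁, b₁ ∈ pre₁ e₁ ∨ b₁ ∈ post₁ e₁) ∧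
      (∀ b₂ : B₂, ∃ e₂ : E₂, b₂ ∈ pre₂ e₂ ∨ b₂ ∈ post₂ e₂) ∧
      @petriPoly B₁ E₁ iE₁ pre₁ post₁ φ₁ = P₁ ∧
      @petriPoly B₂ E₂ iE₂ pre₂ post₂ φ₂ = P₂ ∧
      ∃ (β : B ≃ B₁ ⊕ B₂)
        (η : E ≃ {p : Option E₁ × Option E₂ // p ≠ (none, none)}),
        (∀ b : B, φ b = Sum.elim φ₁ φ₂ (β b)) ∧
        (∀ e : E, ⇑β '' (↑(pre e) : Set B) =
          Sum.inl '' ↑(((η e).val.1).elim ∅ pre₁) ∪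
          Sum.inr '' ↑(((η e).val.2).elim ∅ pre₂)) ∧
        (∀ e : E, ⇑β '' (↑(post e) : Set B) =
          Sum.inl '' ↑(((η e).val.1).elim ∅ post₁) ∪
          Sum.inr '' ↑(((η e).val.2).elim ∅ post₂)) := by
  classical
  simp only [image_eq_union_iff_map_eq_disjSum]
  constructor
  · intro h
    have h₀ : coeff 0 P₁ * coeff 0 P₂ ≠ 0 := by
      simpa [← constantCoeff_eq, h] using coeff_zero_petriPoly_ne_zero pre post φ
    have hdisj := Set.disjoint_iff_inter_eq_empty.2 hτ
    obtain ⟨hrange₁, hrange₂⟩ := range_restrict_of_range_eq_union (by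
      rw [← tauMv_petriPoly hφ hcov, h, tauMv_mul hdisj (left_ne_zero_of_mul h₀)
        (right_ne_zero_of_mul h₀)]) hdisj
    have hφ₁ := hφ.comp (Subtype.val_injective (p := fun b => φ b ∈ tauMv P₁))
    have hφ₂ := hφ.comp (Subtype.val_injective (p := fun b => φ b ∉ tauMv P₁))
    obtain ⟨E₁, _, pre₁, post₁, hN₁, hcov₁⟩ :=
      exists_petriPoly_eq hφ₁ (left_ne_zero_of_mul h₀) hrange₁
    obtain ⟨E₂, _, pre₂, post₂, hN₂, hcov₂⟩ :=
      exists_petriPoly_eq hφ₂ (right_ne_zero_of_mul h₀) hrange₂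
    let β := (Equiv.sumCompl fun b => φ b ∈ tauMv P₁).symm
    have hβφ (b : B) : φ b = Sum.elim (φ ∘ Subtype.val) (φ ∘ Subtype.val) (β b) := by
      by_cases hb : φ b ∈ tauMv P₁ <;> simp [β, hb]
    have hpoly : petriPoly (fun e => (pre e).map β.toEmbedding)
        (fun e => (post e).map β.toEmbedding) (Sum.elim (φ ∘ Subtype.val) (φ ∘ Subtype.val)) =
        petriPoly (parallelArcs pre₁ pre₂) (parallelArcs post₁ post₂)
          (Sum.elim (φ ∘ Subtype.val) (φ ∘ Subtype.val)) := by
      rw [petriPoly_map_equiv, petriPoly_parallel, hN₁, hN₂, ← h, ← funext hβφ]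
    obtain ⟨η, hη⟩ := (petriPoly_eq_iff_exists_equiv
      (hφ₁.sumElim hφ₂ fun a b hab => b.2 ((congrArg (· ∈ tauMv P₁) hab).mp a.2))).1 hpoly
    exact ⟨_, E₁, _, E₂, inferInstance, _, inferInstance, _, pre₁, post₁, pre₂, post₂, _, _,
      hφ₁, hφ₂, by rwa [hrange₁, hrange₂], hcov₁, hcov₂, hN₁, hN₂, β, η, hβφ,
      fun e => (hη e).1.symm, fun e => (hη e).2.symm⟩
  · rintro ⟨B₁, E₁, B₂, E₂, _, _, _, _, pre₁, post₁, pre₂, post₂, φ₁, φ₂, -, -, -, -, -,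
      rfl, rfl, β, η, hβφ, hpre, hpost⟩
    calc petriPoly pre post φ
        = petriPoly (fun e => (pre e).map β.toEmbedding) (fun e => (post e).map β.toEmbedding)
            (Sum.elim φ₁ φ₂) := by rw [petriPoly_map_equiv, ← funext hβφ]
      _ = petriPoly (parallelArcs pre₁ pre₂) (parallelArcs post₁ post₂) (Sum.elim φ₁ φ₂) :=
          petriPoly_congr_of_equiv _ η fun e => ⟨(hpre e).symm, (hpost e).symm⟩
      _ = petriPoly pre₁ post₁ φ₁ * petriPoly pre₂ post₂ φ₂ := petriPoly_parallel ..
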